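/- Let n = 4, β_1 = d'u_1∧d'u_3 − d'u_2∧d'u_4 and β_2 = d'u_1∧d'u_4 + d'u_2∧d'u_3 in Λ^{2,0}V', and let ω = −β_1∧J(β_1) − β_2∧J(β_2) ∈ Λ^{2,2}V'. Then: (1) ω is a positive Lagerberg form; (2) ι(ω) = ½(η + F(η)) for η = (du_1 + i du_2)∧i(dū_1 − i dū_2)∧(du_3 + i du_4)∧i(dū_3 − i dū_4), and ι(ω) is a strongly positive complex form; (3) ω is not a strongly positive Lagerberg form. -/

import Mathlib

/- Setup: `V = ℝⁿ` with its standard basis, `V_ℂ` its complexification,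
`V* = Hom_ℝ(V,ℂ)` and `V̄*` the antilinear maps `V_ℂ → ℂ`.  The bigraded exterior algebra
`Λ^{·,·}V* = Λ_ℂ(V* ⊕ V̄*)` is modeled as the exterior algebra over `ℂ` of the free
complex module on the `2n` generators `du_1,…,du_n` (first summand) and
`dū_1,…,dū_n` (second summand). -/

noncomputable section
open ExteriorAlgebra

/-- The algebra `Λ^{·,·}V* = Λ_ℂ(V* ⊕ V̄*)` for `V = ℝⁿ`. -/
abbrev CForms (n : ℕ) : Type := ExteriorAlgebra ℂ ((Fin n ⊕ Fin n) → ℂ)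

/-- The basis element `du_i` of `V*`. -/
def cdu {n : ℕ} (i : Fin n) : CForms n := ExteriorAlgebra.ι ℂ (Pi.single (Sum.inl i) (1 : ℂ))

/-- The basis element `dū_i` of `V̄*`. -/
def cdub {n : ℕ} (i : Fin n) : CForms n := ExteriorAlgebra.ι ℂ (Pi.single (Sum.inr i) (1 : ℂ))

/-- A general element `Σ cᵢ • du_i` of `V*`. -/
def cOne {n : ℕ} (c : Fin n → ℂ) : CForms n := ∑ i, c i • cdu i

/-- A general element `Σ cᵢ • dū_i` of `V̄*`. -/
def cOneBar {n : ℕ} (c : Fin n → ℂ) : CForms n := ∑ i, c i • cdub i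

/-- The conjugate `ᾱ = Σ c̄ᵢ • dū_i ∈ V̄*` of the one-form `α = Σ cᵢ • du_i ∈ V*`. -/
def cConjOne {n : ℕ} (c : Fin n → ℂ) : CForms n := ∑ i, (starRingEnd ℂ) (c i) • cdub i

/-- A decomposable `(p,0)`-form `α₁ ∧ … ∧ α_p` with `α_j ∈ V*`. -/
def cDecomp {n p : ℕ} (c : Fin p → Fin n → ℂ) : CForms n := (List.ofFn fun j => cOne (c j)).prod

/-- The conjugate `ᾱ₁ ∧ … ∧ ᾱ_p` of the decomposable `(p,0)`-form given by `c`. -/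
def cDecompBar {n p : ℕ} (c : Fin p → Fin n → ℂ) : CForms n :=
  (List.ofFn fun j => cConjOne (c j)).prod

/-- `Λ^{p,q}V*`: the span of products of `p` elements of `V*` and `q` elements of `V̄*`. -/
def CFormsPQ (n p q : ℕ) : Submodule ℂ (CForms n) :=
  Submodule.span ℂ { x | ∃ (a : Fin p → Fin n → ℂ) (b : Fin q → Fin n → ℂ),
    x = cDecomp a * (List.ofFn fun j => cOneBar (b j)).prod }

/-- The convex cone generated by a set `S` (nonnegative real coefficients). -/
def realCone {n : ℕ} (S : Set (CForms n)) : Set (CForms n) :=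
  { x | ∃ (m : ℕ) (t : Fin m → ℝ) (y : Fin m → CForms n),
      (∀ k, 0 ≤ t k) ∧ (∀ k, y k ∈ S) ∧ x = ∑ k, (t k : ℂ) • y k }

/-- The generators `α₁ ∧ iᾱ₁ ∧ … ∧ α_p ∧ iᾱ_p` (`α_j ∈ V*`) of the strongly positive cone. -/
def cStrongGen (n p : ℕ) : Set (CForms n) :=
  { x | ∃ c : Fin p → Fin n → ℂ,
      x = (List.ofFn fun j => cOne (c j) * (Complex.I • cConjOne (c j))).prod }

/-- The cone `Λ^{p,p}_{+,s}V*` of strongly positive `(p,p)`-forms. -/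
def cStrongPos (n p : ℕ) : Set (CForms n) := realCone (cStrongGen n p)

/-- The generators `i^{p²} α ∧ ᾱ` (`α ∈ Λ^{p,0}V*`, written as a sum of decomposables)
of the positive cone. -/
def cPosGen (n p : ℕ) : Set (CForms n) :=
  { x | ∃ (m : ℕ) (c : Fin m → Fin p → Fin n → ℂ),
      x = Complex.I ^ (p ^ 2) • ((∑ l, cDecomp (c l)) * (∑ l, cDecompBar (c l))) }

/-- The cone `Λ^{p,p}_{+}V*` of positive `(p,p)`-forms. -/
def cPos (n p : ℕ) : Set (CForms n) := realCone (cPosGen n p)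

/-- The canonical orientation form `ω_n = du_1 ∧ i dū_1 ∧ … ∧ du_n ∧ i dū_n`. -/
def cOmegaTop (n : ℕ) : CForms n := (List.ofFn fun i : Fin n => cdu i * (Complex.I • cdub i)).prod

/-- The set `Λ^{p,p}_{+,w}V*` of weakly positive `(p,p)`-forms: `(p,p)`-forms `ω` such that
for every strongly positive `η` of type `(n-p,n-p)` there is a real `γ ≥ 0` with
`ω ∧ η = γ ω_n`. -/
def cWeakPos (n p : ℕ) : Set (CForms n) :=
  { x | x ∈ CFormsPQ n p p ∧
      ∀ η ∈ cStrongPos n (n - p), ∃ γ : ℝ, 0 ≤ γ ∧ x * η = (γ : ℂ) • cOmegaTop n }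

/-- `σ` is the complex conjugation of `Λ^{·,·}V*`: the (unique) antilinear multiplicative
involution of the ℝ-algebra `Λ^{·,·}V*` with `σ(du_i) = dū_i` and `σ(dū_i) = du_i`. -/
structure IsConjugation (n : ℕ) (σ : CForms n → CForms n) : Prop where
  map_add : ∀ x y, σ (x + y) = σ x + σ y
  map_smul : ∀ (c : ℂ) (x), σ (c • x) = (starRingEnd ℂ) c • σ x
  map_mul : ∀ x y, σ (x * y) = σ x * σ y
  map_one : σ 1 = 1
  map_du : ∀ i : Fin n, σ (cdu i) = cdub i
  map_dub : ∀ i : Fin n, σ (cdub i) = cdu i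

/-- `F` is the antilinear involution of the ℝ-algebra `Λ^{·,·}V*` determined by
`F(λ) = λ̄`, `F(du_i) = du_i` and `F(dū_i) = -dū_i`. -/
structure IsFInvolution (n : ℕ) (F : CForms n → CForms n) : Prop where
  map_add : ∀ x y, F (x + y) = F x + F y
  map_smul : ∀ (c : ℂ) (x), F (c • x) = (starRingEnd ℂ) c • F x
  map_mul : ∀ x y, F (x * y) = F x * F y
  map_one : F 1 = 1
  map_du : ∀ i : Fin n, F (cdu i) = cdu i
  map_dub : ∀ i : Fin n, F (cdub i) = - cdub i

/-- The algebra `Λ^{·,·}V' = Λ_ℝ(V' ⊕ V'')` of Lagerberg forms for `V = ℝⁿ`. -/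
abbrev LForms (n : ℕ) : Type := ExteriorAlgebra ℝ ((Fin n ⊕ Fin n) → ℝ)

/-- The basis element `d'u_i` of `V'`. -/
def ldu {n : ℕ} (i : Fin n) : LForms n := ExteriorAlgebra.ι ℝ (Pi.single (Sum.inl i) (1 : ℝ))

/-- The basis element `d''u_i` of `V''`. -/
def lddu {n : ℕ} (i : Fin n) : LForms n := ExteriorAlgebra.ι ℝ (Pi.single (Sum.inr i) (1 : ℝ))

/-- A general element `Σ cᵢ • d'u_i` of `V'`. -/
def lOne {n : ℕ} (c : Fin n → ℝ) : LForms n := ∑ i, c i • ldu i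

/-- A general element `Σ cᵢ • d''u_i` of `V''`; note `J(Σ cᵢ d'u_i) = Σ cᵢ d''u_i`. -/
def lOne'' {n : ℕ} (c : Fin n → ℝ) : LForms n := ∑ i, c i • lddu i

/-- A decomposable `(p,0)`-form `α₁ ∧ … ∧ α_p` with `α_j ∈ V'`. -/
def lDecomp {n p : ℕ} (c : Fin p → Fin n → ℝ) : LForms n := (List.ofFn fun j => lOne (c j)).prod

/-- Its image `J(α₁) ∧ … ∧ J(α_p)` under the Lagerberg involution. -/
def lDecomp'' {n p : ℕ} (c : Fin p → Fin n → ℝ) : LForms n :=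
  (List.ofFn fun j => lOne'' (c j)).prod

/-- `Λ^{p,q}V'`: the span of products of `p` elements of `V'` and `q` elements of `V''`. -/
def LFormsPQ (n p q : ℕ) : Submodule ℝ (LForms n) :=
  Submodule.span ℝ { x | ∃ (a : Fin p → Fin n → ℝ) (b : Fin q → Fin n → ℝ),
    x = lDecomp a * lDecomp'' b }

/-- The convex cone generated by a set `S` (nonnegative real coefficients). -/
def lCone {n : ℕ} (S : Set (LForms n)) : Set (LForms n) :=
  { x | ∃ (m : ℕ) (t : Fin m → ℝ) (y : Fin m → LForms n),
      (∀ k, 0 ≤ t k) ∧ (∀ k, y k ∈ S) ∧ x = ∑ k, t k • y k }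

/-- The generators `α₁ ∧ J(α₁) ∧ … ∧ α_p ∧ J(α_p)` (`α_j ∈ V'`) of the strongly positive
cone. -/
def lStrongGen (n p : ℕ) : Set (LForms n) :=
  { x | ∃ c : Fin p → Fin n → ℝ, x = (List.ofFn fun j => lOne (c j) * lOne'' (c j)).prod }

/-- The cone `Λ^{p,p}_{+,s}V'` of strongly positive Lagerberg `(p,p)`-forms. -/
def lStrongPos (n p : ℕ) : Set (LForms n) := lCone (lStrongGen n p)

/-- The generators `(-1)^{p(p-1)/2} α ∧ J(α)` (`α ∈ Λ^{p,0}V'`, written as a sum of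
decomposables) of the positive cone. -/
def lPosGen (n p : ℕ) : Set (LForms n) :=
  { x | ∃ (m : ℕ) (c : Fin m → Fin p → Fin n → ℝ),
      x = ((-1 : ℝ)) ^ (p * (p - 1) / 2) • ((∑ l, lDecomp (c l)) * (∑ l, lDecomp'' (c l))) }

/-- The cone `Λ^{p,p}_{+}V'` of positive Lagerberg `(p,p)`-forms. -/
def lPos (n p : ℕ) : Set (LForms n) := lCone (lPosGen n p)

/-- The Lagerberg orientation form `τ_n = d'u_1 ∧ d''u_1 ∧ … ∧ d'u_n ∧ d''u_n`. -/
def lTauTop (n : ℕ) : LForms n := (List.ofFn fun i : Fin n => ldu i * lddu i).prod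

/-- `J` is the Lagerberg involution: the (unique) ℝ-algebra automorphism of `Λ^{·,·}V'`
with `J(d'u_i) = d''u_i` and `J(d''u_i) = d'u_i`. -/
structure IsLagerbergJ (n : ℕ) (J : LForms n → LForms n) : Prop where
  map_add : ∀ x y, J (x + y) = J x + J y
  map_smul : ∀ (c : ℝ) (x), J (c • x) = c • J x
  map_mul : ∀ x y, J (x * y) = J x * J y
  map_one : J 1 = 1
  map_du : ∀ i : Fin n, J (ldu i) = lddu i
  map_ddu : ∀ i : Fin n, J (lddu i) = ldu i

/-- The set `Λ^{p,p}_{sym}V'` of symmetric Lagerberg `(p,p)`-forms: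
those with `J(ω) = (-1)^p ω`. -/
def lSym (n p : ℕ) (J : LForms n → LForms n) : Set (LForms n) :=
  { x | x ∈ LFormsPQ n p p ∧ J x = ((-1 : ℝ)) ^ p • x }

/-- The set `Λ^{p,p}_{+,w}V'` of weakly positive Lagerberg `(p,p)`-forms: symmetric
`(p,p)`-forms `ω` such that for every strongly positive `η` of type `(n-p,n-p)` there is a
real `γ ≥ 0` with `ω ∧ η = γ τ_n`. -/
def lWeakPos (n p : ℕ) (J : LForms n → LForms n) : Set (LForms n) :=
  { x | x ∈ lSym n p J ∧
      ∀ η ∈ lStrongPos n (n - p), ∃ γ : ℝ, 0 ≤ γ ∧ x * η = γ • lTauTop n }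

/-- `ι` is the canonical embedding `Λ^{·,·}V' → Λ^{·,·}V*`: the (unique) ℝ-algebra
homomorphism with `ι(d'u_j) = du_j` and `ι(d''u_j) = i dū_j`.  Its image is the set of
`F`-invariant complex forms. -/
structure IsIota (n : ℕ) (ι : LForms n → CForms n) : Prop where
  map_add : ∀ x y, ι (x + y) = ι x + ι y
  map_smul : ∀ (c : ℝ) (x), ι (c • x) = (c : ℂ) • ι x
  map_mul : ∀ x y, ι (x * y) = ι x * ι y
  map_one : ι 1 = 1
  map_du : ∀ i : Fin n, ι (ldu i) = cdu i
  map_ddu : ∀ i : Fin n, ι (lddu i) = Complex.I • cdub i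

/-! The form `ω` splits as `τ₀₁ ∧ τ₂₃ - σ₀₁ ∧ σ₂₃` with `τᵢⱼ = d'uᵢ∧d''uᵢ + d'uⱼ∧d''uⱼ` and
`σᵢⱼ = d'uᵢ∧d''uⱼ - d'uⱼ∧d''uᵢ`. Each of the two factors of `η` is `ι(τ) - i ι(σ)`, and `F` fixes
the image of `ι`, so `F(η)` is `η` with `i` replaced by `-i` and `η + F(η) = 2 ι(ω)`; moreover `F`
maps strongly positive generators to strongly positive generators.

Positivity of `ω` is read off its definition, since `p(p-1)/2 = 1` for `p = 2`. For the failure of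
strong positivity, the algebra map `Λ(V' ⊕ V'') → Λ(V')` identifying `d''uᵢ` with `d'uᵢ` sends each
factor `α ∧ J(α)` of a strongly positive generator to `α ∧ α = 0`, but it sends `τᵢⱼ` to `0` and
`σᵢⱼ` to `2 d'uᵢ∧d'uⱼ`, hence `ω` to `-4 d'u₀∧d'u₁∧d'u₂∧d'u₃ ≠ 0`. -/

theorem add_mem_lCone {n : ℕ} {S : Set (LForms n)} {x y : LForms n} (hx : x ∈ S) (hy : y ∈ S) :
    x + y ∈ lCone S :=
  ⟨2, 1, ![x, y], fun _ => zero_le_one, fun k => by fin_cases k <;> assumption,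
    by simp [Fin.sum_univ_two]⟩

theorem smul_add_mem_realCone {n : ℕ} {S : Set (CForms n)} {x y : CForms n} (hx : x ∈ S)
    (hy : y ∈ S) {t : ℝ} (ht : 0 ≤ t) : (t : ℂ) • (x + y) ∈ realCone S :=
  ⟨2, fun _ => t, ![x, y], fun _ => ht, fun k => by fin_cases k <;> assumption,
    by simp [Fin.sum_univ_two]⟩

theorem lOne_single {n : ℕ} (i : Fin n) (a : ℝ) : lOne (Pi.single i a) = a • ldu i := by
  simp [lOne, Pi.single_apply]

namespace IsLagerbergJ

variable {n : ℕ} {J : LForms n → LForms n}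

def toRingHom (hJ : IsLagerbergJ n J) : LForms n →+* LForms n where
  toFun := J
  map_one' := hJ.map_one
  map_mul' := hJ.map_mul
  map_zero' := by simpa using hJ.map_smul 0 0
  map_add' := hJ.map_add

theorem coe_toRingHom (hJ : IsLagerbergJ n J) : ⇑hJ.toRingHom = J := rfl

theorem map_sub (hJ : IsLagerbergJ n J) (x y : LForms n) : J (x - y) = J x - J y :=
  _root_.map_sub hJ.toRingHom x y

theorem map_lOne (hJ : IsLagerbergJ n J) (c : Fin n → ℝ) : J (lOne c) = lOne'' c := by
  simp only [lOne, lOne'', ← hJ.map_du, ← hJ.map_smul]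
  exact _root_.map_sum hJ.toRingHom _ _

theorem map_lDecomp (hJ : IsLagerbergJ n J) {p : ℕ} (c : Fin p → Fin n → ℝ) :
    J (lDecomp c) = lDecomp'' c := by
  rw [lDecomp, lDecomp'', ← hJ.coe_toRingHom, map_list_prod, List.map_ofFn]
  simp [Function.comp_def, hJ.coe_toRingHom, hJ.map_lOne]

theorem smul_mul_map_mem_lPosGen (hJ : IsLagerbergJ n J) {m p : ℕ}
    (c : Fin m → Fin p → Fin n → ℝ) {α : LForms n} (hα : α = ∑ l, lDecomp (c l)) :
    (-1 : ℝ) ^ (p * (p - 1) / 2) • (α * J α) ∈ lPosGen n p := by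
  refine ⟨m, c, ?_⟩
  rw [hα, ← hJ.coe_toRingHom, map_sum]
  simp [hJ.coe_toRingHom, hJ.map_lDecomp]

theorem neg_mul_map_mem_lPosGen_two (hJ : IsLagerbergJ n J) {m : ℕ}
    (c : Fin m → Fin 2 → Fin n → ℝ) {α : LForms n} (hα : α = ∑ l, lDecomp (c l)) :
    -(α * J α) ∈ lPosGen n 2 := by
  simpa using hJ.smul_mul_map_mem_lPosGen c hα

end IsLagerbergJ

namespace IsIota

variable {n : ℕ} {ι : LForms n → CForms n}

def toRingHom (hι : IsIota n ι) : LForms n →+* CForms n where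
  toFun := ι
  map_one' := hι.map_one
  map_mul' := hι.map_mul
  map_zero' := by simpa using hι.map_smul 0 0
  map_add' := hι.map_add

theorem coe_toRingHom (hι : IsIota n ι) : ⇑hι.toRingHom = ι := rfl

theorem map_sub (hι : IsIota n ι) (x y : LForms n) : ι (x - y) = ι x - ι y :=
  _root_.map_sub hι.toRingHom x y

theorem map_ι (hι : IsIota n ι) (v : Fin n ⊕ Fin n → ℝ) :
    ι (ExteriorAlgebra.ι ℝ v) = ∑ k, (v k : ℂ) • ι (ExteriorAlgebra.ι ℝ (Pi.single k 1)) := by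
  conv_lhs => rw [← Finset.univ_sum_single v]
  rw [map_sum, ← hι.coe_toRingHom, map_sum]
  refine Finset.sum_congr rfl fun k _ => ?_
  rw [hι.coe_toRingHom, ← hι.map_smul, ← LinearMap.map_smul, ← Pi.single_smul, smul_eq_mul,
    mul_one]

end IsIota

section ComplexForms

open Complex

variable {n : ℕ}

theorem cOne_add (c d : Fin n → ℂ) : cOne (c + d) = cOne c + cOne d := by
  simp [cOne, add_smul, Finset.sum_add_distrib]

theorem cOne_single (i : Fin n) (a : ℂ) : cOne (Pi.single i a) = a • cdu i := by
  simp [cOne, Pi.single_apply]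

theorem cConjOne_add (c d : Fin n → ℂ) : cConjOne (c + d) = cConjOne c + cConjOne d := by
  simp [cConjOne, add_smul, Finset.sum_add_distrib]

theorem cConjOne_single (i : Fin n) (a : ℂ) :
    cConjOne (Pi.single i a) = (starRingEnd ℂ) a • cdub i := by
  simp [cConjOne, Pi.single_apply, apply_ite (starRingEnd ℂ)]

theorem cdu_add_mul_cdub_sub_eq_cOne (i j : Fin n) :
    (cdu i + I • cdu j) * (I • (cdub i - I • cdub j)) =
      cOne (Pi.single i 1 + Pi.single j I) * (I • cConjOne (Pi.single i 1 + Pi.single j I)) := by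
  simp [cOne_add, cOne_single, cConjOne_add, cConjOne_single, sub_eq_add_neg]

theorem mul_mem_cStrongGen_two (c₀ c₁ : Fin n → ℂ) :
    cOne c₀ * (I • cConjOne c₀) * (cOne c₁ * (I • cConjOne c₁)) ∈ cStrongGen n 2 :=
  ⟨![c₀, c₁], by simp [List.ofFn_succ]⟩

theorem half_smul_mul_sub_add_mul_add {A : Type*} [Ring A] [Algebra ℂ A] (a b c d : A) :
    (2⁻¹ : ℂ) • ((a - I • b) * (c - I • d) + (a + I • b) * (c + I • d)) = a * c - b * d := by
  simp only [mul_add, add_mul, mul_sub, sub_mul, smul_mul_assoc, mul_smul_comm]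
  linear_combination (norm := module) I_sq • (b * d)

namespace IsFInvolution

variable {F : CForms n → CForms n}

def toRingHom (hF : IsFInvolution n F) : CForms n →+* CForms n where
  toFun := F
  map_one' := hF.map_one
  map_mul' := hF.map_mul
  map_zero' := by simpa using hF.map_smul 0 0
  map_add' := hF.map_add

theorem coe_toRingHom (hF : IsFInvolution n F) : ⇑hF.toRingHom = F := rfl

theorem map_sub (hF : IsFInvolution n F) (x y : CForms n) : F (x - y) = F x - F y :=
  _root_.map_sub hF.toRingHom x y

theorem map_cOne (hF : IsFInvolution n F) (c : Fin n → ℂ) : F (cOne c) = cOne (star c) := by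
  rw [cOne, ← hF.coe_toRingHom, map_sum, cOne]
  refine Finset.sum_congr rfl fun i _ => ?_
  rw [hF.coe_toRingHom, hF.map_smul, hF.map_du]
  rfl

theorem map_I_smul_cConjOne (hF : IsFInvolution n F) (c : Fin n → ℂ) :
    F (I • cConjOne c) = I • cConjOne (star c) := by
  rw [hF.map_smul, cConjOne, ← hF.coe_toRingHom, map_sum, cConjOne, conj_I, neg_smul,
    ← smul_neg, ← Finset.sum_neg_distrib]
  congr 1
  refine Finset.sum_congr rfl fun i _ => ?_
  simp [hF.coe_toRingHom, hF.map_smul, hF.map_dub]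

theorem map_mem_cStrongGen (hF : IsFInvolution n F) {p : ℕ} {x : CForms n}
    (hx : x ∈ cStrongGen n p) : F x ∈ cStrongGen n p := by
  obtain ⟨c, rfl⟩ := hx
  refine ⟨fun j => star (c j), ?_⟩
  rw [← hF.coe_toRingHom, map_list_prod, List.map_ofFn]
  simp only [Function.comp_def, hF.coe_toRingHom, hF.map_mul, hF.map_cOne,
    hF.map_I_smul_cConjOne]

theorem map_iota (hF : IsFInvolution n F) {ι : LForms n → CForms n} (hι : IsIota n ι)
    (x : LForms n) : F (ι x) = ι x := by
  induction x using ExteriorAlgebra.induction with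
  | algebraMap r =>
    rw [Algebra.algebraMap_eq_smul_one, hι.map_smul, hι.map_one, hF.map_smul, hF.map_one,
      conj_ofReal]
  | ι v =>
    rw [hι.map_ι, ← hF.coe_toRingHom, map_sum]
    refine Finset.sum_congr rfl fun k _ => ?_
    rw [hF.coe_toRingHom, hF.map_smul, conj_ofReal]
    congr 1
    rcases k with i | i
    · change F (ι (ldu i)) = ι (ldu i)
      rw [hι.map_du, hF.map_du]
    · change F (ι (lddu i)) = ι (lddu i)
      rw [hι.map_ddu, hF.map_smul, hF.map_dub, conj_I, smul_neg, neg_smul, neg_neg]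
  | mul a b ha hb => rw [hι.map_mul, hF.map_mul, ha, hb]
  | add a b ha hb => rw [hι.map_add, hF.map_add, ha, hb]

theorem half_smul_add_map_eq_iota (hF : IsFInvolution n F) {ι : LForms n → CForms n}
    (hι : IsIota n ι) (a b c d : LForms n) {x : CForms n}
    (hx : x = (ι a - I • ι b) * (ι c - I • ι d)) :
    (2⁻¹ : ℂ) • (x + F x) = ι (a * c - b * d) := by
  have hFx : F x = (ι a + I • ι b) * (ι c + I • ι d) := by
    simp only [hx, hF.map_mul, hF.map_sub, hF.map_smul, hF.map_iota hι, conj_I, neg_smul,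
      sub_neg_eq_add]
  rw [hFx, hx, half_smul_mul_sub_add_mul_add, hι.map_sub, hι.map_mul, hι.map_mul]

end IsFInvolution

end ComplexForms

section Lines

variable {n : ℕ}

def lTau (i j : Fin n) : LForms n := ldu i * lddu i + ldu j * lddu j

def lSigma (i j : Fin n) : LForms n := ldu i * lddu j - ldu j * lddu i

theorem lddu_mul_ldu (i j : Fin n) : lddu i * ldu j = -(ldu j * lddu i) :=
  eq_neg_of_add_eq_zero_left (ExteriorAlgebra.ι_add_mul_swap _ _)

theorem lddu_mul_ldu_mul (i j : Fin n) (x : LForms n) :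
    lddu i * (ldu j * x) = -(ldu j * (lddu i * x)) := by
  rw [← mul_assoc, lddu_mul_ldu, neg_mul, mul_assoc]

theorem lTau_mul_lTau_sub_lSigma_mul_lSigma (i j k l : Fin n) :
    lTau i j * lTau k l - lSigma i j * lSigma k l =
      -((ldu i * ldu k - ldu j * ldu l) * (lddu i * lddu k - lddu j * lddu l))
        - (ldu i * ldu l + ldu j * ldu k) * (lddu i * lddu l + lddu j * lddu k) := by
  simp only [lTau, lSigma, mul_add, add_mul, mul_sub, sub_mul, mul_assoc, lddu_mul_ldu_mul,
    mul_neg]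
  noncomm_ring

theorem IsIota.cdu_add_mul_cdub_sub {ι : LForms n → CForms n} (hι : IsIota n ι) (i j : Fin n) :
    (cdu i + Complex.I • cdu j) * (Complex.I • (cdub i - Complex.I • cdub j)) =
      ι (lTau i j) - Complex.I • ι (lSigma i j) := by
  simp only [lTau, lSigma, hι.map_add, hι.map_sub, hι.map_mul, hι.map_du, hι.map_ddu,
    add_mul, mul_sub, smul_mul_assoc, mul_smul_comm, smul_smul, smul_sub,
    smul_add, Complex.I_mul_I]
  module

end Lines

theorem ExteriorAlgebra.ιMulti_single_ne_zero (R : Type*) [CommRing R] [Nontrivial R] (n : ℕ) :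
    ExteriorAlgebra.ιMulti R n (fun i : Fin n => Pi.single i (1 : R)) ≠ 0 := by
  intro h
  have key := congrArg (ExteriorAlgebra.liftAlternating
    (Pi.single (M := fun i => (Fin n → R) [⋀^Fin i]→ₗ[R] R) n Matrix.detRowAlternating)) h
  rw [ExteriorAlgebra.liftAlternating_apply_ιMulti, Pi.single_eq_same, map_zero] at key
  have hone : (Matrix.of fun i : Fin n => (Pi.single i (1 : R) : Fin n → R)) = 1 := by
    ext i j
    simp [Matrix.one_apply, Pi.single_apply, eq_comm]
  change Matrix.det (Matrix.of fun i : Fin n => (Pi.single i (1 : R) : Fin n → R)) = 0 at key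
  rw [hone, Matrix.det_one] at key
  exact one_ne_zero key

def lFold (n : ℕ) : LForms n →ₐ[ℝ] ExteriorAlgebra ℝ (Fin n → ℝ) :=
  ExteriorAlgebra.map (LinearMap.funLeft ℝ ℝ Sum.inl + LinearMap.funLeft ℝ ℝ Sum.inr)

section Fold

variable {n : ℕ}

theorem lFold_ldu (i : Fin n) : lFold n (ldu i) = ExteriorAlgebra.ι ℝ (Pi.single i 1) := by
  rw [lFold, ldu, ExteriorAlgebra.map_apply_ι]
  congr 1
  ext j
  simp [LinearMap.funLeft_apply, Pi.single_apply]

theorem lFold_lddu (i : Fin n) : lFold n (lddu i) = ExteriorAlgebra.ι ℝ (Pi.single i 1) := by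
  rw [lFold, lddu, ExteriorAlgebra.map_apply_ι]
  congr 1
  ext j
  simp [LinearMap.funLeft_apply, Pi.single_apply]

theorem lFold_lOne (c : Fin n → ℝ) : lFold n (lOne c) = ExteriorAlgebra.ι ℝ c := by
  conv_rhs => rw [← Finset.univ_sum_single c]
  simp only [lOne, map_sum, map_smul, lFold_ldu]
  refine Finset.sum_congr rfl fun i _ => ?_
  rw [← LinearMap.map_smul, ← Pi.single_smul, smul_eq_mul, mul_one]

theorem lFold_lOne'' (c : Fin n → ℝ) : lFold n (lOne'' c) = ExteriorAlgebra.ι ℝ c := by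
  conv_rhs => rw [← Finset.univ_sum_single c]
  simp only [lOne'', map_sum, map_smul, lFold_lddu]
  refine Finset.sum_congr rfl fun i _ => ?_
  rw [← LinearMap.map_smul, ← Pi.single_smul, smul_eq_mul, mul_one]

theorem lFold_eq_zero_of_mem_lStrongGen {p : ℕ} (hp : p ≠ 0) {x : LForms n}
    (hx : x ∈ lStrongGen n p) : lFold n x = 0 := by
  obtain ⟨c, rfl⟩ := hx
  obtain ⟨q, rfl⟩ := Nat.exists_eq_succ_of_ne_zero hp
  rw [List.ofFn_succ, List.prod_cons, map_mul, map_mul, lFold_lOne, lFold_lOne'',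
    ExteriorAlgebra.ι_sq_zero, zero_mul]

theorem lFold_eq_zero_of_mem_lStrongPos {p : ℕ} (hp : p ≠ 0) {x : LForms n}
    (hx : x ∈ lStrongPos n p) : lFold n x = 0 := by
  obtain ⟨m, t, y, -, hy, rfl⟩ := hx
  simp [lFold_eq_zero_of_mem_lStrongGen hp (hy _)]

theorem lFold_lTau (i j : Fin n) : lFold n (lTau i j) = 0 := by
  simp [lTau, lFold_ldu, lFold_lddu]

theorem lFold_lSigma (i j : Fin n) :
    lFold n (lSigma i j) =
      (2 : ℝ) • (ExteriorAlgebra.ι ℝ (Pi.single i 1) * ExteriorAlgebra.ι ℝ (Pi.single j 1)) := by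
  rw [lSigma, map_sub, map_mul, map_mul, lFold_ldu, lFold_ldu, lFold_lddu, lFold_lddu,
    eq_neg_of_add_eq_zero_left (ExteriorAlgebra.ι_add_mul_swap (R := ℝ) (Pi.single j 1) _)]
  module

end Fold

theorem lFold_lTau_mul_lTau_sub_lSigma_mul_lSigma :
    lFold 4 (lTau 0 1 * lTau 2 3 - lSigma 0 1 * lSigma 2 3) =
      (-4 : ℝ) • ExteriorAlgebra.ιMulti ℝ 4 (fun i : Fin 4 => Pi.single i 1) := by
  rw [map_sub, map_mul, map_mul, lFold_lTau, lFold_lSigma, lFold_lSigma,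
    ExteriorAlgebra.ιMulti_apply]
  simp [List.ofFn_succ, mul_assoc, smul_smul]
  norm_num

/-- Example 2.20. Let `n = 4`,
`β₁ = d'u_1∧d'u_3 − d'u_2∧d'u_4`, `β₂ = d'u_1∧d'u_4 + d'u_2∧d'u_3` in `Λ^{2,0}V'` (0-based
indices below), and `ω = −β₁∧J(β₁) − β₂∧J(β₂) ∈ Λ^{2,2}V'`.  Then:
(1) `ω` is a positive Lagerberg form;
(2) `ι(ω) = ½(η + F(η))` for
`η = (du_1 + i du_2) ∧ i(dū_1 − i dū_2) ∧ (du_3 + i du_4) ∧ i(dū_3 − i dū_4)`,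
and `ι(ω)` is a strongly positive complex form;
(3) `ω` is not a strongly positive Lagerberg form. -/
theorem positive_but_not_strongly_positive_example
    (J : LForms 4 → LForms 4) (hJ : IsLagerbergJ 4 J)
    (F : CForms 4 → CForms 4) (hF : IsFInvolution 4 F)
    (ι : LForms 4 → CForms 4) (hι : IsIota 4 ι)
    (β₁ β₂ ω : LForms 4)
    (hβ₁ : β₁ = ldu 0 * ldu 2 - ldu 1 * ldu 3)
    (hβ₂ : β₂ = ldu 0 * ldu 3 + ldu 1 * ldu 2)
    (hω : ω = -(β₁ * J β₁) - β₂ * J β₂)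
    (η : CForms 4)
    (hη : η = (cdu 0 + Complex.I • cdu 1) * (Complex.I • (cdub 0 - Complex.I • cdub 1)) *
      ((cdu 2 + Complex.I • cdu 3) * (Complex.I • (cdub 2 - Complex.I • cdub 3)))) :
    ω ∈ lPos 4 2 ∧
    ι ω = (2⁻¹ : ℂ) • (η + F η) ∧ ι ω ∈ cStrongPos 4 2 ∧
    ω ∉ lStrongPos 4 2 := by
  have hω' : ω = lTau 0 1 * lTau 2 3 - lSigma 0 1 * lSigma 2 3 := by
    simp only [hω, hβ₁, hβ₂, hJ.map_sub, hJ.map_add, hJ.map_mul, hJ.map_du,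
      lTau_mul_lTau_sub_lSigma_mul_lSigma]
  have hιω : ι ω = (2⁻¹ : ℂ) • (η + F η) := by
    rw [hω', hF.half_smul_add_map_eq_iota hι _ _ _ _
      (by rw [hη, hι.cdu_add_mul_cdub_sub, hι.cdu_add_mul_cdub_sub])]
  have hη_mem : η ∈ cStrongGen 4 2 := by
    rw [hη, cdu_add_mul_cdub_sub_eq_cOne, cdu_add_mul_cdub_sub_eq_cOne]
    exact mul_mem_cStrongGen_two _ _
  refine ⟨?_, hιω, ?_, ?_⟩
  · rw [hω, sub_eq_add_neg]
    refine add_mem_lCone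
      (hJ.neg_mul_map_mem_lPosGen_two ![![Pi.single 0 1, Pi.single 2 1],
        ![Pi.single 1 (-1), Pi.single 3 1]] ?_)
      (hJ.neg_mul_map_mem_lPosGen_two ![![Pi.single 0 1, Pi.single 3 1],
        ![Pi.single 1 1, Pi.single 2 1]] ?_) <;>
    simp [hβ₁, hβ₂, lDecomp, List.ofFn_succ, lOne_single, sub_eq_add_neg]
  · rw [hιω, show (2⁻¹ : ℂ) = ((2⁻¹ : ℝ) : ℂ) by push_cast; rfl]
    exact smul_add_mem_realCone hη_mem (hF.map_mem_cStrongGen hη_mem) (by norm_num)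
  · intro hω_strong
    apply ExteriorAlgebra.ιMulti_single_ne_zero ℝ 4
    have h := lFold_eq_zero_of_mem_lStrongPos two_ne_zero hω_strong
    rw [hω', lFold_lTau_mul_lTau_sub_lSigma_mul_lSigma] at h
    exact (smul_eq_zero.mp h).resolve_left (by norm_num)
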